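/- Let x, y ∈ ℝⁿ with x ≠ y, let J = {i ∈ [n] : x_i = y_i}, and let x_{[J]} = Σ_{j∈J} x_j e_j (the vector agreeing with x on J and zero elsewhere). Then both half-lines x_{[J]} + { t·(y ⊟ x) : t ∈ [1,∞) } and x_{[J]} + { t·(x ⊟ y) : t ∈ [1,∞) } are contained in D^∞(x,y); in particular when J = ∅ the half-lines { t·(y ⊟ x) : t ≥ 1 } and { t·(x ⊟ y) : t ≥ 1 } are contained in D^∞(x,y). -/

import Mathlib

open Filter Finset

/-- The binary idempotent operation `⊞`. -/
noncomputable def bop (a b : ℝ) : ℝ :=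
  if |b| < |a| then a else if |a| < |b| then b else (a + b) / 2

/-- The unique real `(2p+1)`-th root of `t`. -/
noncomputable def oddRoot (p : ℕ) (t : ℝ) : ℝ :=
  Real.sign t * |t| ^ ((1 : ℝ) / (2 * (p : ℝ) + 1))

/-- `ξ_I[u](α) = Card{i ∈ I : u i = α} − Card{i ∈ I : u i = −α}`. -/
noncomputable def xiMap {ι : Type*} (I : Finset ι) (u : ι → ℝ) (α : ℝ) : ℤ :=
  ((I.filter fun i => u i = α).card : ℤ) - ((I.filter fun i => u i = -α).card : ℤ)

/-- The residual index set `J_I(u)`. -/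
noncomputable def resid {ι : Type*} (I : Finset ι) (u : ι → ℝ) : Finset ι :=
  I.filter fun i => xiMap I u (u i) ≠ 0

/-- The `n`-ary extension `⊞_{i ∈ I} u i` of the binary operation `⊞`. -/
noncomputable def Fop {ι : Type*} (I : Finset ι) (u : ι → ℝ) : ℝ :=
  if h : (resid I u).Nonempty then
    if 0 < xiMap I u ((resid I u).sup' h fun i => |u i|) then (resid I u).sup' h u
    else if xiMap I u ((resid I u).sup' h fun i => |u i|) < 0 then (resid I u).inf' h u
    else 0
  else 0

/-- The Chebyshev norm `max_{i ∈ [n]} |x i|`. -/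
noncomputable def chebNorm {n : ℕ} (x : Fin n → ℝ) : ℝ := ⨆ i, |x i|

/-- The ultrametric distance `d_⊞(x,y) = max_i |x_i ⊟ y_i|`. -/
noncomputable def dB {n : ℕ} (x y : Fin n → ℝ) : ℝ := ⨆ i, |bop (x i) (-(y i))|

/-- The F-line `D^∞(x,y)`. -/
noncomputable def fLine {n : ℕ} (x y : Fin n → ℝ) : Set (Fin n → ℝ) :=
  { z | ∃ t r s w : ℝ, Fop (Finset.univ : Finset (Fin 4)) ![t, r, s, w] = 1 ∧
      z = fun i => Fop (Finset.univ : Finset (Fin 4)) ![t * x i, r * x i, s * y i, w * y i] }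

/-!
Take the parameters `(-t, 0, t, 1)`. The `m`-ary operation `⊞` depends only on the signed
multiplicities `ξ`, so an opposite pair `±c` can be cancelled: `⊞(-t, 0, t, 1) = ⊞(0, 1) = 1`.
In coordinate `i` the four entries are `-t xᵢ, 0, t yᵢ, yᵢ`. If `xᵢ ≠ yᵢ`, the entry of largest
modulus is `t (yᵢ ⊟ xᵢ)`, and every other entry is either equal to it or strictly smaller in
modulus. If `xᵢ = yᵢ`, the pair `±t xᵢ` cancels and leaves `xᵢ`. The second half-line follows from
`D^∞(x,y) = D^∞(y,x)`.
-/

section Fop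

variable {ι : Type*} {I : Finset ι} {u : ι → ℝ}

lemma xiMap_eq_sum (α : ℝ) :
    xiMap I u α = ∑ i ∈ I, ((if u i = α then 1 else 0) - (if u i = -α then 1 else 0) : ℤ) := by
  simp only [xiMap, card_filter, sum_sub_distrib]
  push_cast
  rfl

lemma xiMap_neg (α : ℝ) : xiMap I u (-α) = -xiMap I u α := by
  simp only [xiMap, neg_neg]
  ring

lemma xiMap_apply_ne_zero_iff {i : ι} {α : ℝ} (h : |u i| = |α|) :
    xiMap I u (u i) ≠ 0 ↔ xiMap I u α ≠ 0 := by
  rcases abs_eq_abs.mp h with h | h <;> simp [h, xiMap_neg]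

lemma exists_mem_resid_abs_eq {α : ℝ} (h : xiMap I u α ≠ 0) :
    ∃ i ∈ resid I u, |u i| = |α| := by
  by_contra! hne
  refine h (sub_eq_zero.mpr ?_)
  rw [filter_false_of_mem, filter_false_of_mem] <;> intro i hi hui
  · exact hne i (mem_filter.mpr ⟨hi, (xiMap_apply_ne_zero_iff (by rw [hui, abs_neg])).mpr h⟩)
      (by rw [hui, abs_neg])
  · exact hne i (mem_filter.mpr ⟨hi, (xiMap_apply_ne_zero_iff (by rw [hui])).mpr h⟩)
      (by rw [hui])

lemma exists_mem_resid_eq {α : ℝ} (h : 0 < xiMap I u α) : ∃ i ∈ resid I u, u i = α := by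
  have : (I.filter fun i => u i = α).Nonempty := by
    rw [← card_pos]
    unfold xiMap at h
    omega
  obtain ⟨i, hi⟩ := this
  obtain ⟨hiI, rfl⟩ := mem_filter.mp hi
  exact ⟨i, mem_filter.mpr ⟨hiI, h.ne'⟩, rfl⟩

lemma Fop_eq_zero_of_xiMap_eq_zero (h : ∀ α, xiMap I u α = 0) : Fop I u = 0 := by
  have : resid I u = ∅ := filter_false_of_mem fun i _ => not_not.mpr (h (u i))
  rw [Fop, dif_neg (by simp [this])]

lemma Fop_eq_of_xiMap_pos {m : ℝ} (hm : 0 < xiMap I u m)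
    (hmax : ∀ α, xiMap I u α ≠ 0 → |α| ≤ |m|) : Fop I u = m := by
  obtain ⟨i₀, hi₀, hu₀⟩ := exists_mem_resid_eq hm
  have hne : (resid I u).Nonempty := ⟨i₀, hi₀⟩
  have hle : ∀ i ∈ resid I u, |u i| ≤ |m| := fun i hi => hmax _ (mem_filter.mp hi).2
  have hsup : (resid I u).sup' hne (fun i => |u i|) = |m| :=
    le_antisymm (sup'_le _ _ hle) (hu₀ ▸ le_sup' (fun i => |u i|) hi₀)
  rw [Fop, dif_pos hne, hsup]
  rcases lt_or_gt_of_ne (show m ≠ 0 by rintro rfl; simp [xiMap] at hm) with hneg | hpos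
  · have : xiMap I u |m| < 0 := by rw [abs_of_neg hneg, xiMap_neg]; omega
    rw [if_neg this.not_gt, if_pos this]
    refine le_antisymm (hu₀ ▸ inf'_le u hi₀) (le_inf' _ _ fun i hi => ?_)
    have := neg_abs_le (u i)
    linarith [hle i hi, abs_of_neg hneg]
  · rw [abs_of_pos hpos, if_pos hm]
    refine le_antisymm (sup'_le _ _ fun i hi => ?_) (hu₀ ▸ le_sup' u hi₀)
    exact (le_abs_self _).trans ((hle i hi).trans (abs_of_pos hpos).le)

lemma exists_xiMap_pos_forall_abs_le {α₀ : ℝ} (h : xiMap I u α₀ ≠ 0) :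
    ∃ m, 0 < xiMap I u m ∧ ∀ α, xiMap I u α ≠ 0 → |α| ≤ |m| := by
  obtain ⟨i₀, hi₀, -⟩ := exists_mem_resid_abs_eq h
  obtain ⟨k, hk, hkmax⟩ := exists_mem_eq_sup' ⟨i₀, hi₀⟩ fun i => |u i|
  have hbound : ∀ α, xiMap I u α ≠ 0 → |α| ≤ |u k| := fun α hα => by
    obtain ⟨i, hi, hia⟩ := exists_mem_resid_abs_eq hα
    exact hia ▸ hkmax ▸ le_sup' (fun i => |u i|) hi
  have hk0 : xiMap I u (u k) ≠ 0 := (mem_filter.mp hk).2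
  rcases lt_or_gt_of_ne hk0 with hneg | hpos
  · exact ⟨-u k, by rw [xiMap_neg]; omega, by simpa only [abs_neg] using hbound⟩
  · exact ⟨u k, hpos, hbound⟩

lemma Fop_congr {κ : Type*} {J : Finset κ} {v : κ → ℝ}
    (h : ∀ α, xiMap I u α = xiMap J v α) : Fop I u = Fop J v := by
  by_cases h0 : ∀ α, xiMap I u α = 0
  · rw [Fop_eq_zero_of_xiMap_eq_zero h0,
      Fop_eq_zero_of_xiMap_eq_zero fun α => (h α).symm.trans (h0 α)]
  · obtain ⟨α₀, hα₀⟩ := not_forall.mp h0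
    obtain ⟨m, hm, hmax⟩ := exists_xiMap_pos_forall_abs_le hα₀
    rw [Fop_eq_of_xiMap_pos hm hmax, Fop_eq_of_xiMap_pos (h m ▸ hm) fun α => h α ▸ hmax α]

lemma Fop_eq_of_forall_eq_or_abs_lt {m : ℝ} {i₀ : ι} (hi₀ : i₀ ∈ I) (hu₀ : u i₀ = m)
    (h : ∀ i ∈ I, u i = m ∨ |u i| < |m|) : Fop I u = m := by
  have habs : ∀ i ∈ I, |u i| ≤ |m| := fun i hi => (h i hi).elim (fun e => e ▸ le_rfl) le_of_lt
  by_cases hm0 : m = 0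
  · subst hm0
    have hzero : ∀ i ∈ I, u i = 0 := fun i hi => abs_nonpos_iff.mp (by simpa using habs i hi)
    refine Fop_eq_zero_of_xiMap_eq_zero fun α => ?_
    rw [xiMap_eq_sum]
    refine sum_eq_zero fun i hi => ?_
    rw [hzero i hi]
    by_cases hα : α = 0 <;> simp [hα, eq_comm]
  refine Fop_eq_of_xiMap_pos ?_ fun α hα => ?_
  · have hpos : 0 < (I.filter fun i => u i = m).card :=
      card_pos.mpr ⟨i₀, mem_filter.mpr ⟨hi₀, hu₀⟩⟩
    have hnone : (I.filter fun i => u i = -m) = ∅ := filter_false_of_mem fun i hi hum => by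
      rcases h i hi with e | e
      · exact hm0 (by linarith)
      · rw [hum, abs_neg] at e
        exact lt_irrefl _ e
    simp only [xiMap, hnone, card_empty]
    omega
  · obtain ⟨i, hi, hia⟩ := exists_mem_resid_abs_eq hα
    exact hia ▸ habs i (mem_of_mem_filter i hi)

end Fop

lemma Fop_swap_pairs (a b c d : ℝ) :
    Fop (univ : Finset (Fin 4)) ![c, d, a, b] = Fop univ ![a, b, c, d] :=
  Fop_congr fun α => by
    simp only [xiMap_eq_sum, Fin.sum_univ_four, Matrix.cons_val]
    grind

lemma Fop_cancel_opposite (a b c : ℝ) :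
    Fop (univ : Finset (Fin 4)) ![-a, b, a, c] = Fop univ ![b, c] :=
  Fop_congr fun α => by
    simp only [xiMap_eq_sum, Fin.sum_univ_four, Fin.sum_univ_two, Matrix.cons_val,
      neg_eq_iff_eq_neg]
    grind

lemma fLine_comm {n : ℕ} (x y : Fin n → ℝ) : fLine x y = fLine y x := by
  suffices h : ∀ x y : Fin n → ℝ, fLine x y ⊆ fLine y x from (h x y).antisymm (h y x)
  rintro x y z ⟨t, r, s, w, h1, rfl⟩
  exact ⟨s, w, t, r, by rwa [Fop_swap_pairs], funext fun i => (Fop_swap_pairs ..).symm⟩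

lemma Fop_zero_left (a : ℝ) : Fop (univ : Finset (Fin 2)) ![0, a] = a := by
  refine Fop_eq_of_forall_eq_or_abs_lt (i₀ := 1) (mem_univ _) rfl fun i _ => ?_
  fin_cases i
  · rcases eq_or_ne a 0 with h | h <;> simp [h]
  · simp

lemma eq_or_abs_lt_abs_mul {t : ℝ} (ht : 1 ≤ t) (a : ℝ) : a = t * a ∨ |a| < |t * a| := by
  rcases ht.eq_or_lt with rfl | ht
  · simp
  rcases eq_or_ne a 0 with rfl | ha
  · simp
  right
  rw [abs_mul, abs_of_pos (one_pos.trans ht)]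
  exact lt_mul_left (abs_pos.mpr ha) ht

lemma bop_eq_left_of_abs_le {a b : ℝ} (h : |b| ≤ |a|) (hab : b ≠ -a) : bop a b = a := by
  rcases h.lt_or_eq with h | h
  · rw [bop, if_pos h]
  · rcases abs_eq_abs.mp h with rfl | rfl
    · rw [bop, if_neg (lt_irrefl _), if_neg (lt_irrefl _)]; ring
    · exact absurd rfl hab

lemma bop_neg_self (a : ℝ) : bop a (-a) = 0 := by
  rw [bop, abs_neg, if_neg (lt_irrefl _), if_neg (lt_irrefl _)]; ring

section Halfline

variable {t a b : ℝ}

lemma Fop_halfline_of_abs_le (ht : 1 ≤ t) (hab : a ≠ b) (hle : |a| ≤ |b|) :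
    Fop (univ : Finset (Fin 4)) ![-t * a, 0, t * b, b] = t * b := by
  have ht0 : 0 < t := one_pos.trans_le ht
  have hb : b ≠ 0 := by
    rintro rfl
    exact hab (abs_nonpos_iff.mp (by simpa using hle))
  have h₀ : -t * a = t * b ∨ |-t * a| < |t * b| := by
    rcases hle.lt_or_eq with hlt | heq
    · right
      rwa [neg_mul, abs_neg, abs_mul, abs_mul, abs_of_pos ht0, mul_lt_mul_iff_right₀ ht0]
    · left
      rcases abs_eq_abs.mp heq with h | rfl
      · exact absurd h hab
      · ring
  refine Fop_eq_of_forall_eq_or_abs_lt (i₀ := 2) (mem_univ _) rfl fun i _ => ?_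
  fin_cases i
  exacts [h₀, Or.inr (by simpa [ht0.ne'] using hb), Or.inl rfl, eq_or_abs_lt_abs_mul ht b]

lemma Fop_halfline_of_abs_lt (ht : 1 ≤ t) (hlt : |b| < |a|) :
    Fop (univ : Finset (Fin 4)) ![-t * a, 0, t * b, b] = -t * a := by
  have ht0 : 0 < t := one_pos.trans_le ht
  have ha : a ≠ 0 := by
    rintro rfl
    exact (abs_nonneg b).not_gt (by simpa using hlt)
  refine Fop_eq_of_forall_eq_or_abs_lt (i₀ := 0) (mem_univ _) rfl fun i _ => ?_
  fin_cases i
  · exact Or.inl rfl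
  · exact Or.inr (by simpa [ht0.ne'] using ha)
  · show t * b = -t * a ∨ |t * b| < |-t * a|
    right
    rwa [neg_mul, abs_neg, abs_mul, abs_mul, abs_of_pos ht0, mul_lt_mul_iff_right₀ ht0]
  · show b = -t * a ∨ |b| < |-t * a|
    right
    rw [neg_mul, abs_neg, abs_mul, abs_of_pos ht0]
    exact hlt.trans_le (le_mul_of_one_le_left (abs_nonneg a) ht)

lemma Fop_halfline_coord (ht : 1 ≤ t) (a b : ℝ) :
    Fop (univ : Finset (Fin 4)) ![-t * a, 0 * a, t * b, 1 * b]
      = (if a = b then a else 0) + t * bop b (-a) := by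
  simp only [zero_mul, one_mul]
  rcases eq_or_ne a b with rfl | hab
  · rw [if_pos rfl, bop_neg_self, neg_mul, Fop_cancel_opposite, Fop_zero_left]
    ring
  rw [if_neg hab, zero_add]
  rcases le_or_gt |a| |b| with hle | hlt
  · rw [bop_eq_left_of_abs_le (by rwa [abs_neg]) (neg_injective.ne hab),
      Fop_halfline_of_abs_le ht hab hle]
  · rw [bop, abs_neg, if_neg hlt.not_gt, if_pos hlt, Fop_halfline_of_abs_lt ht hlt]
    ring

end Halfline

lemma halfline_mem_fLine {n : ℕ} (x y : Fin n → ℝ) {t : ℝ} (ht : 1 ≤ t) :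
    (fun i => (if x i = y i then x i else 0) + t * bop (y i) (-(x i))) ∈ fLine x y :=
  ⟨-t, 0, t, 1, by rw [Fop_cancel_opposite, Fop_zero_left],
    funext fun i => (Fop_halfline_coord ht (x i) (y i)).symm⟩

theorem stmt18_general (n : ℕ) (x y : Fin n → ℝ) :
    (∀ t : ℝ, 1 ≤ t →
      (fun i => (if x i = y i then x i else 0) + t * bop (y i) (-(x i))) ∈ fLine x y) ∧
    (∀ t : ℝ, 1 ≤ t →
      (fun i => (if x i = y i then x i else 0) + t * bop (x i) (-(y i))) ∈ fLine x y) := by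
  refine ⟨fun t ht => halfline_mem_fLine x y ht, fun t ht => ?_⟩
  rw [fLine_comm]
  convert halfline_mem_fLine y x ht using 3 with i
  by_cases h : x i = y i <;> simp [h, eq_comm]

/-- the F-line `D^∞(x,y)` contains the two half-lines
`x_{[J]} + t·(y ⊟ x)` and `x_{[J]} + t·(x ⊟ y)`, `t ≥ 1`,
where `J = {i : x i = y i}`. -/
theorem stmt18 (n : ℕ) (x y : Fin n → ℝ) (hxy : x ≠ y) :
    (∀ t : ℝ, 1 ≤ t →
      (fun i => (if x i = y i then x i else 0) + t * bop (y i) (-(x i))) ∈ fLine x y) ∧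
    (∀ t : ℝ, 1 ≤ t →
      (fun i => (if x i = y i then x i else 0) + t * bop (x i) (-(y i))) ∈ fLine x y) :=
  stmt18_general n x y
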